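/- arXiv:1607.04754 — 6 statements merged into one kernel-verified Lean document; each statement's English description precedes it below -/
import Mathlib

section
/- Let f : ℝ₊^K → ℝ^K be monotone (x ≤ y componentwise implies f(x) ≤ f(y) componentwise) and strictly subhomogeneous (for every α > 1 and every x ≥ 0, f(αx) < α·f(x) componentwise). Then f is strictly positive: for every x ≥ 0 and every component k, f_k(x) > 0. (Hence positivity is a consequence of monotonicity and scalability.) -/
/-- Positivity is a consequence of monotonicity and strict subhomogeneity (scalability):
a monotone, strictly subhomogeneous function on the nonnegative orthant is strictly
positive in every component. -/
theorem mss_implies_positivity (K : ℕ)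
    (f : (Fin K → ℝ) → (Fin K → ℝ))
    (hf_mono : ∀ x y : Fin K → ℝ, 0 ≤ x → x ≤ y → f x ≤ f y)
    (hf_ssub : ∀ α : ℝ, 1 < α → ∀ x : Fin K → ℝ, 0 ≤ x →
      ∀ k : Fin K, f (α • x) k < α * f x k) :
    ∀ x : Fin K → ℝ, 0 ≤ x → ∀ k : Fin K, 0 < f x k := by
  intro x hx k
  have h0 : f ((2 : ℝ) • (0 : Fin K → ℝ)) k < 2 * f 0 k :=
    hf_ssub 2 one_lt_two 0 le_rfl k
  rw [smul_zero] at h0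
  have hpos : 0 < f 0 k := by linarith
  have hle : f 0 ≤ f x := hf_mono 0 x le_rfl hx
  exact hpos.trans_le (hle k)
end

section
/- If I : ℝ₊^K → ℝ^K and I' : ℝ₊^K → ℝ^K are standard interference functions, then the componentwise maximum I^max defined by I^max_j(p) = max{I_j(p), I'_j(p)} for each component j is a standard interference function. -/
/-- A standard interference function on the nonnegative orthant of `ℝ^K`:
positivity, monotonicity, and scalability. -/
def StandardInterferenceFunction (K : ℕ) (I : (Fin K → ℝ) → (Fin K → ℝ)) : Prop :=
  (∀ p : Fin K → ℝ, 0 ≤ p → ∀ k : Fin K, 0 < I p k) ∧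
  (∀ p p' : Fin K → ℝ, 0 ≤ p → p ≤ p' → I p ≤ I p') ∧
  (∀ α : ℝ, 1 < α → ∀ p : Fin K → ℝ, 0 ≤ p → ∀ k : Fin K, I (α • p) k < α * I p k)

/-- The componentwise maximum of two standard interference functions is a standard
interference function. -/
theorem max_standard (K : ℕ)
    (I I' : (Fin K → ℝ) → (Fin K → ℝ))
    (hI : StandardInterferenceFunction K I)
    (hI' : StandardInterferenceFunction K I') :
    StandardInterferenceFunction K (fun p k => max (I p k) (I' p k)) := by
  obtain ⟨h1, h2, h3⟩ := hI
  obtain ⟨h1', h2', h3'⟩ := hI'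
  refine ⟨fun p hp k => lt_max_of_lt_left (h1 p hp k),
    fun p p' hp hpp k => max_le_max (h2 p p' hp hpp k) (h2' p p' hp hpp k),
    fun α hα p hp k => max_lt ?_ ?_⟩
  · exact lt_of_lt_of_le (h3 α hα p hp k) (by
      have := le_max_left (I p k) (I' p k)
      nlinarith)
  · exact lt_of_lt_of_le (h3' α hα p hp k) (by
      have := le_max_right (I p k) (I' p k)
      nlinarith)
end

section
/- Let S be a finite nonempty index set and for each s ∈ S let I^{(s)} : ℝ₊^K → ℝ^K be a standard interference function. Then the componentwise minimum over the family, defined by I_j(p) = min_{s ∈ S} I^{(s)}_j(p) for each component j, is a standard interference function. (In particular, the modified interference functions obtained by minimizing a standard interference function over a finite set of base-station assignments, or over a finite set of antenna tilts, are standard.) -/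
/-- The componentwise minimum of a finite nonempty family of standard interference
functions (e.g. indexed by base-station assignments or antenna tilts) is a standard
interference function. -/
theorem finite_min_standard (K : ℕ) (S : Type*) [Fintype S] [Nonempty S]
    (I : S → (Fin K → ℝ) → (Fin K → ℝ))
    (hI : ∀ s : S, StandardInterferenceFunction K (I s)) :
    StandardInterferenceFunction K
      (fun p k => Finset.univ.inf' Finset.univ_nonempty (fun s : S => I s p k)) := by
  refine ⟨?_, ?_, ?_⟩
  · intro p hp k
    rw [Finset.lt_inf'_iff]
    exact fun s _ => (hI s).1 p hp k
  · intro p p' hp hpp' k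
    apply Finset.le_inf'
    intro s _
    exact le_trans (Finset.inf'_le _ (Finset.mem_univ s)) ((hI s).2.1 p p' hp hpp' k)
  · intro α hα p hp k
    obtain ⟨s, -, hs⟩ := Finset.exists_mem_eq_inf' Finset.univ_nonempty (fun s : S => I s p k)
    calc Finset.univ.inf' Finset.univ_nonempty (fun s : S => I s (α • p) k)
        ≤ I s (α • p) k := Finset.inf'_le _ (Finset.mem_univ s)
      _ < α * I s p k := (hI s).2.2 α hα p hp k
      _ = α * Finset.univ.inf' Finset.univ_nonempty (fun s : S => I s p k) := by rw [hs]
end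

section
/- (Uplink–downlink duality.) Let C ≥ 1, let Γ and Ψ be C×C diagonal matrices with positive diagonal entries, let M be a C×C real matrix with nonnegative entries, let P > 0 and Σ > 0, and let z ∈ ℝ^C be the vector with every entry equal to Σ/C (the total noise distributed equally over the C clusters). Define the extended downlink coupling matrix Λ^{(d)} = Γ·Ψ·(M + (1/P)·z·𝟙ᵀ) and the extended uplink coupling matrix Λ^{(u)} = Γ·Ψ·(Mᵀ + (1/P)·z·𝟙ᵀ), where 𝟙 ∈ ℝ^C is the all-ones vector. Then the spectral radii coincide: ρ(Λ^{(d)}) = ρ(Λ^{(u)}). Consequently the downlink and the virtual uplink max-min utility balancing problems achieve the same balanced level C^{(d)}(P) = C^{(u)}(P) = 1/ρ(Λ^{(d)}). -/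
open scoped Matrix

/-- The spectrum of the transpose of a matrix equals the spectrum of the matrix. -/
lemma my_spectrum_transpose {n R : Type*} [Fintype n] [DecidableEq n] [CommRing R]
    (A : Matrix n n R) : spectrum R Aᵀ = spectrum R A := by
  ext r
  simp only [spectrum.mem_iff, not_iff_not]
  have h : (algebraMap R (Matrix n n R)) r - Aᵀ =
      ((algebraMap R (Matrix n n R)) r - A)ᵀ := by
    rw [Matrix.transpose_sub, Algebra.algebraMap_eq_smul_one, Matrix.transpose_smul,
      Matrix.transpose_one]
  rw [h, Matrix.isUnit_transpose]

/-- Uplink-downlink duality: with `Γ, Ψ` positive diagonal matrices, `M` nonnegative,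
total power `P > 0` and the total noise `Σ > 0` distributed equally over the `C`
clusters (`z c = Σ / C`), the extended downlink coupling matrix
`Λ⁽ᵈ⁾ = ΓΨ(M + (1/P) z 𝟙ᵀ)` and the extended uplink coupling matrix
`Λ⁽ᵘ⁾ = ΓΨ(Mᵀ + (1/P) z 𝟙ᵀ)` have the same spectral radius (viewed as complex
matrices); hence the downlink and virtual uplink max-min balancing problems achieve
the same balanced level `1/ρ(Λ⁽ᵈ⁾)`. -/
theorem uplink_downlink_duality (C : ℕ) (hC : 1 ≤ C)
    (γ ψ : Fin C → ℝ) (hγ : ∀ c, 0 < γ c) (hψ : ∀ c, 0 < ψ c)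
    (M : Matrix (Fin C) (Fin C) ℝ) (hM : ∀ i j, 0 ≤ M i j)
    (P Stot : ℝ) (hP : 0 < P) (hS : 0 < Stot)
    (z : Fin C → ℝ) (hz : ∀ c, z c = Stot / C) :
    spectralRadius ℂ
        ((Matrix.diagonal γ * Matrix.diagonal ψ *
          (M + (1 / P) • Matrix.vecMulVec z (fun _ => 1))).map Complex.ofReal) =
      spectralRadius ℂ
        ((Matrix.diagonal γ * Matrix.diagonal ψ *
          (Mᵀ + (1 / P) • Matrix.vecMulVec z (fun _ => 1))).map Complex.ofReal) := by
  classical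
  set φ : Matrix (Fin C) (Fin C) ℝ →+* Matrix (Fin C) (Fin C) ℂ :=
    Complex.ofRealHom.mapMatrix with hφ
  -- the complex diagonal matrix
  set D : Matrix (Fin C) (Fin C) ℂ :=
    Matrix.diagonal (fun c => (γ c * ψ c : ℂ)) with hD
  have hDmap : (Matrix.diagonal γ * Matrix.diagonal ψ).map Complex.ofReal = D := by
    rw [Matrix.diagonal_mul_diagonal]
    rw [hD]
    ext i j
    by_cases h : i = j <;> simp [Matrix.diagonal, Matrix.map_apply, h]
  set A : Matrix (Fin C) (Fin C) ℂ :=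
    (M + (1 / P) • Matrix.vecMulVec z (fun _ => 1)).map Complex.ofReal with hA
  set B : Matrix (Fin C) (Fin C) ℂ :=
    (Mᵀ + (1 / P) • Matrix.vecMulVec z (fun _ => 1)).map Complex.ofReal with hB
  have hBA : B = Aᵀ := by
    rw [hA, hB]
    ext i j
    simp only [Matrix.map_apply, Matrix.transpose_apply, Matrix.add_apply,
      Matrix.smul_apply, Matrix.vecMulVec_apply, Matrix.transpose_apply]
    rw [hz i, hz j]
  -- rewrite both sides as products
  have hL : (Matrix.diagonal γ * Matrix.diagonal ψ *
      (M + (1 / P) • Matrix.vecMulVec z (fun _ => 1))).map Complex.ofReal = D * A := by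
    rw [show (Complex.ofReal : ℝ → ℂ) = ⇑Complex.ofRealHom from rfl, Matrix.map_mul]
    exact congrArg₂ HMul.hMul hDmap rfl
  have hR : (Matrix.diagonal γ * Matrix.diagonal ψ *
      (Mᵀ + (1 / P) • Matrix.vecMulVec z (fun _ => 1))).map Complex.ofReal = D * B := by
    rw [show (Complex.ofReal : ℝ → ℂ) = ⇑Complex.ofRealHom from rfl, Matrix.map_mul]
    exact congrArg₂ HMul.hMul hDmap rfl
  rw [hL, hR, hBA]
  -- D is a unit
  have hdet : D.det ≠ 0 := by
    rw [hD, Matrix.det_diagonal]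
    refine Finset.prod_ne_zero_iff.mpr fun c _ => ?_
    have h1 : (γ c : ℂ) ≠ 0 := by exact_mod_cast (ne_of_gt (hγ c))
    have h2 : (ψ c : ℂ) ≠ 0 := by exact_mod_cast (ne_of_gt (hψ c))
    exact mul_ne_zero h1 h2
  have hDu : IsUnit D := (Matrix.isUnit_iff_isUnit_det D).mpr hdet.isUnit
  obtain ⟨u, hu⟩ := hDu
  have hspec : spectrum ℂ (D * Aᵀ) = spectrum ℂ (D * A) := by
    have h1 : spectrum ℂ (D * Aᵀ) = spectrum ℂ ((D * Aᵀ)ᵀ) :=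
      (my_spectrum_transpose (D * Aᵀ)).symm
    have hDt : Dᵀ = D := by rw [hD, Matrix.diagonal_transpose]
    have h2 : (D * Aᵀ)ᵀ = A * D := by
      rw [Matrix.transpose_mul, Matrix.transpose_transpose, hDt]
    have h3 : spectrum ℂ (A * D) = spectrum ℂ (D * A) := by
      have hc := spectrum.units_conjugate (R := ℂ) (a := A * D) (u := u)
      have hui : D * ((u⁻¹ : (Matrix (Fin C) (Fin C) ℂ)ˣ) : Matrix (Fin C) (Fin C) ℂ)
          = 1 := by rw [← hu]; exact u.mul_inv
      have hconj : (u : Matrix (Fin C) (Fin C) ℂ) * (A * D) *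
          ((u⁻¹ : (Matrix (Fin C) (Fin C) ℂ)ˣ) : Matrix (Fin C) (Fin C) ℂ) = D * A := by
        rw [hu, ← Matrix.mul_assoc D A D, Matrix.mul_assoc (D * A) D, hui,
          Matrix.mul_one]
      rw [← hconj, hc]
    rw [h1, h2, h3]
  simp only [spectralRadius, hspec]
end

section
/- Let M be a C×C real matrix with nonnegative entries, z ∈ ℝ^C with positive entries, γ ∈ ℝ^C with positive entries, Γ = diag(γ), P > 0, and C* > 0. For a vector q ∈ ℝ^C with strictly positive entries, the following are equivalent: (i) q_c / (γ_c·(M·q + z)_c) = C* for every c ∈ {1,…,C} and ∑_c q_c = P; (ii) Λ·q = (1/C*)·q and ∑_c q_c = P, where Λ := Γ·(M + (1/P)·z·𝟙ᵀ) and 𝟙 is the all-ones vector. That is, a power vector that balances all utilities at the common level C* under the sum-power constraint is exactly a positive eigenvector of the extended coupling matrix Λ with eigenvalue 1/C*. -/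
open scoped Matrix

/-- A strictly positive power vector balances all utilities
`U_c(q)/γ_c = q_c / (γ_c (M q + z)_c)` at the common level `C*` under the sum-power
constraint `∑ q = P` if and only if it is an eigenvector, with eigenvalue `1/C*`, of
the extended coupling matrix `Λ = Γ (M + (1/P) z 𝟙ᵀ)` satisfying `∑ q = P`. -/
theorem balanced_iff_eigenvector (C : ℕ)
    (M : Matrix (Fin C) (Fin C) ℝ) (hM : ∀ i j, 0 ≤ M i j)
    (z γ : Fin C → ℝ) (hz : ∀ c, 0 < z c) (hγ : ∀ c, 0 < γ c)
    (P Cstar : ℝ) (hP : 0 < P) (hCstar : 0 < Cstar)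
    (q : Fin C → ℝ) (hq : ∀ c, 0 < q c) :
    ((∀ c : Fin C, q c / (γ c * (M.mulVec q + z) c) = Cstar) ∧ ∑ c, q c = P) ↔
      ((Matrix.diagonal γ *
          (M + (1 / P) • Matrix.vecMulVec z (fun _ => 1))).mulVec q
          = (1 / Cstar) • q ∧ ∑ c, q c = P) := by
  have hMq : ∀ c, 0 ≤ M.mulVec q c := by
    intro c
    simp only [Matrix.mulVec, dotProduct]
    exact Finset.sum_nonneg fun j _ => mul_nonneg (hM c j) (hq j).le
  have hX : ∀ c, 0 < (M.mulVec q + z) c := fun c =>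
    add_pos_of_nonneg_of_pos (hMq c) (hz c)
  have key : ∀ c, ((Matrix.diagonal γ *
      (M + (1 / P) • Matrix.vecMulVec z (fun _ => 1))).mulVec q) c
      = γ c * (M.mulVec q c + (1 / P) * (z c * ∑ j, q j)) := by
    intro c
    simp only [Matrix.mulVec, Matrix.mul_apply, dotProduct, Matrix.add_apply,
      Matrix.smul_apply, Matrix.vecMulVec_apply, Matrix.diagonal_apply, smul_eq_mul,
      mul_one, ite_mul, zero_mul, Finset.sum_ite_eq, Finset.mem_univ, if_true,
      mul_add, add_mul, Finset.mul_sum, Finset.sum_add_distrib]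
    congr 1 <;> (apply Finset.sum_congr rfl; intro j _; ring)
  constructor
  · rintro ⟨hbal, hsum⟩
    refine ⟨funext fun c => ?_, hsum⟩
    have hb := hbal c
    rw [div_eq_iff (mul_pos (hγ c) (hX c)).ne'] at hb
    simp only [Pi.add_apply] at hb
    rw [key c, hsum, Pi.smul_apply, smul_eq_mul]
    have hPz : (1 : ℝ) / P * (z c * P) = z c := by field_simp
    rw [hPz]
    field_simp
    linear_combination -hb
  · rintro ⟨heig, hsum⟩
    refine ⟨fun c => ?_, hsum⟩
    have h := congrFun heig c
    rw [key c, hsum, Pi.smul_apply, smul_eq_mul] at h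
    have hPz : (1 : ℝ) / P * (z c * P) = z c := by field_simp
    rw [hPz] at h
    rw [div_eq_iff (mul_pos (hγ c) (hX c)).ne']
    simp only [Pi.add_apply]
    field_simp at h
    linear_combination -h
end

section
/- Let f : ℝ₊^K → ℝ^K be a standard interference function, let γ ∈ ℝ^K have positive entries, let ‖·‖ be a monotone norm on ℝ^K (0 ≤ q ≤ q' implies ‖q‖ ≤ ‖q'‖), and let P > 0. Suppose p* ∈ ℝ^K has strictly positive entries, ‖p*‖ = P, and there is C* > 0 with p*_k / (γ_k·f_k(p*)) = C* for every k. Then p* is optimal for the power-constrained max-min utility balancing problem: for every p ≥ 0 with ‖p‖ ≤ P, min over k of (p_k / (γ_k·f_k(p))) ≤ C*. -/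
/-- Optimality of the balanced fixed point: if a standard interference function `f`,
positive targets `γ`, a monotone norm `N` and a power budget `P > 0` admit a strictly
positive vector `p*` with `N p* = P` whose weighted utilities are all balanced at the
level `C* > 0`, then no feasible `p ≥ 0` with `N p ≤ P` achieves a minimum weighted
utility exceeding `C*`. -/
theorem balanced_fixed_point_is_maxmin_optimal (K : ℕ) (hK : 0 < K)
    (f : (Fin K → ℝ) → (Fin K → ℝ))
    (hf_pos : ∀ p : Fin K → ℝ, 0 ≤ p → ∀ k : Fin K, 0 < f p k)
    (hf_mono : ∀ p p' : Fin K → ℝ, 0 ≤ p → p ≤ p' → f p ≤ f p')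
    (hf_scale : ∀ α : ℝ, 1 < α → ∀ p : Fin K → ℝ, 0 ≤ p →
      ∀ k : Fin K, f (α • p) k < α * f p k)
    (γ : Fin K → ℝ) (hγ : ∀ k : Fin K, 0 < γ k)
    (N : (Fin K → ℝ) → ℝ)
    (hN_smul : ∀ (a : ℝ) (q : Fin K → ℝ), N (a • q) = |a| * N q)
    (hN_add : ∀ q q' : Fin K → ℝ, N (q + q') ≤ N q + N q')
    (hN_def : ∀ q : Fin K → ℝ, N q = 0 → q = 0)
    (hN_mono : ∀ q q' : Fin K → ℝ, 0 ≤ q → q ≤ q' → N q ≤ N q')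
    (P : ℝ) (hP : 0 < P)
    (pstar : Fin K → ℝ) (hpstar : ∀ k : Fin K, 0 < pstar k)
    (hNpstar : N pstar = P)
    (Cstar : ℝ) (hCstar : 0 < Cstar)
    (hbal : ∀ k : Fin K, pstar k / (γ k * f pstar k) = Cstar) :
    ∀ p : Fin K → ℝ, 0 ≤ p → N p ≤ P →
      ∃ k : Fin K, p k / (γ k * f p k) ≤ Cstar := by
  intro p hp hNp
  by_contra hcon
  push_neg at hcon
  have hfp : ∀ k, 0 < f p k := hf_pos p hp
  have hppos : ∀ k, 0 < p k := by
    intro k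
    have hd : 0 < γ k * f p k := mul_pos (hγ k) (hfp k)
    have := (lt_div_iff₀ hd).mp (hcon k)
    nlinarith
  obtain ⟨j, -, hj⟩ := Finset.exists_max_image Finset.univ
    (fun k => pstar k / p k) ⟨⟨0, hK⟩, Finset.mem_univ _⟩
  set α := pstar j / p j with hαdef
  have hα : 0 < α := div_pos (hpstar j) (hppos j)
  have hle : ∀ k, pstar k ≤ α * p k := by
    intro k
    have := hj k (Finset.mem_univ k)
    exact (div_le_iff₀ (hppos k)).mp this
  have hpj : pstar j = α * p j := (div_mul_cancel₀ _ (hppos j).ne').symm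
  have hbalj : pstar j = Cstar * (γ j * f pstar j) := by
    have hd : 0 < γ j * f pstar j := mul_pos (hγ j) (hf_pos pstar (fun k => (hpstar k).le) j)
    have := hbal j
    rw [div_eq_iff hd.ne'] at this
    linarith [this]
  have hconj : Cstar * (γ j * f p j) < p j := (lt_div_iff₀ (mul_pos (hγ j) (hfp j))).mp (hcon j)
  rcases le_or_gt α 1 with hα1 | hα1
  · -- case α ≤ 1 : use the monotone norm to show α = 1
    have hle2 : (α⁻¹ • pstar) ≤ p := by
      intro k
      simp only [Pi.smul_apply, smul_eq_mul]
      rw [inv_mul_le_iff₀ hα]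
      exact hle k
    have hpos2 : (0 : Fin K → ℝ) ≤ α⁻¹ • pstar := by
      intro k
      simp only [Pi.smul_apply, smul_eq_mul, Pi.zero_apply]
      exact le_of_lt (mul_pos (inv_pos.mpr hα) (hpstar k))
    have hNle : α⁻¹ * P ≤ N p := by
      have := hN_mono _ _ hpos2 hle2
      rwa [hN_smul, abs_of_pos (by positivity), hNpstar] at this
    have hα1' : 1 ≤ α := by
      have h5 : α⁻¹ * P ≤ P := le_trans hNle hNp
      have h6 : P ≤ α * P := by
        have := mul_le_mul_of_nonneg_left h5 hα.le
        rwa [← mul_assoc, mul_inv_cancel₀ hα.ne', one_mul] at this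
      nlinarith
    have hαeq : α = 1 := le_antisymm hα1 hα1'
    have hple : pstar ≤ p := fun k => by simpa [hαeq] using hle k
    have hfle := hf_mono pstar p (fun k => (hpstar k).le) hple j
    have hpeq : pstar j = p j := by rw [hpj, hαeq, one_mul]
    nlinarith [mul_pos (hγ j) (hf_pos pstar (fun k => (hpstar k).le) j),
      mul_le_mul_of_nonneg_left hfle (le_of_lt (mul_pos hCstar (hγ j)))]
  · -- case α > 1 : use scalability
    have hms : pstar ≤ α • p := by
      intro k
      simpa using hle k
    have h1 : f pstar j ≤ f (α • p) j :=
      hf_mono pstar (α • p) (fun k => (hpstar k).le) hms j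
    have h2 : f (α • p) j < α * f p j := hf_scale α hα1 p hp j
    have h3 : f pstar j < α * f p j := lt_of_le_of_lt h1 h2
    nlinarith [mul_pos hCstar (hγ j), mul_pos (mul_pos hCstar (hγ j)) (hfp j)]
end
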